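/- For every x ≥ 2 one has the representation κ(x) = (x−1) Λ({0})/2 + ∫_0^1 (1 − (1−y)^{x−1}) T(y) dy; consequently the function x ↦ κ(x) is increasing on [2,∞). -/

import Mathlib

/-!
For `0 < p ≤ 1` one has `∫₀ᵖ (1 − (1−y)^{x−1}) dy = p − (1 − (1−p)^x)/x`, so the integrand of
`μ(x)/x` equals `p⁻² ∫₀ᵖ (1 − (1−y)^{x−1}) dy`. Integrating against `Λ` over `(0,1]` and swapping
the order of integration (Tonelli on `0 < y < p ≤ 1`) turns `p⁻²` into `T(y)`; the atom at `0`
contributes `(x−1)Λ({0})/2`. Since `1 − (1−y)^{x−1}` increases with `x` and `T ≥ 0`, `κ` increases.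
-/

open MeasureTheory Real Set Filter Topology

/-- The integrand of `mu`, with its continuous extension `x(x-1)/2` at `p = 0`. -/
noncomputable def muInt (x p : ℝ) : ℝ :=
  if p = 0 then x * (x - 1) / 2
  else (x * p - 1 + (1 - p) ^ x) / p ^ 2

/-- The rate of decrease `μ(x)` of the `Λ`-coalescent. -/
noncomputable def mu (Λ : Measure ℝ) (x : ℝ) : ℝ :=
  ∫ p in Set.Icc (0:ℝ) 1, muInt x p ∂Λ

/-- The rate of decrease per capita `κ(x) = μ(x)/x`. -/
noncomputable def kappa (Λ : Measure ℝ) (x : ℝ) : ℝ := mu Λ x / x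

/-- `T(y) = ∫_{(y,1]} p⁻² Λ(dp)`. -/
noncomputable def T (Λ : Measure ℝ) (y : ℝ) : ℝ :=
  ∫ p in Set.Ioc y 1, 1 / p ^ 2 ∂Λ

open scoped ENNReal

section OrderedTonelli

variable {α : Type*} [LinearOrder α] [TopologicalSpace α] [OrderClosedTopology α]
  [SecondCountableTopology α] [MeasurableSpace α] [OpensMeasurableSpace α]
  {μ ν : Measure α} [SFinite μ] [SFinite ν]

theorem lintegral_setLIntegral_Iio_swap {f : α → α → ℝ≥0∞}
    (hf : Measurable (Function.uncurry f)) :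
    ∫⁻ p, ∫⁻ y in Iio p, f p y ∂ν ∂μ = ∫⁻ y, ∫⁻ p in Ioi y, f p y ∂μ ∂ν := by
  set F : α → α → ℝ≥0∞ := fun p y => {q : α × α | q.2 < q.1}.indicator (Function.uncurry f) (p, y)
  have hF : Measurable (Function.uncurry F) :=
    hf.indicator (measurableSet_lt measurable_snd measurable_fst)
  have hIio : ∀ p, ∫⁻ y in Iio p, f p y ∂ν = ∫⁻ y, F p y ∂ν := fun p =>
    (lintegral_indicator measurableSet_Iio _).symm
  have hIoi : ∀ y, ∫⁻ p in Ioi y, f p y ∂μ = ∫⁻ p, F p y ∂μ := fun y =>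
    (lintegral_indicator measurableSet_Ioi _).symm
  simp_rw [hIio, hIoi]
  exact lintegral_lintegral_swap hF.aemeasurable

end OrderedTonelli

noncomputable def kappaWeight (x y : ℝ) : ℝ := 1 - (1 - y) ^ (x - 1)

section KappaWeight

variable {x y : ℝ}

lemma kappaWeight_nonneg (hx : 1 ≤ x) (hy₀ : 0 ≤ y) (hy₁ : y ≤ 1) : 0 ≤ kappaWeight x y :=
  sub_nonneg.2 (rpow_le_one (by linarith) (by linarith) (by linarith))

lemma kappaWeight_le (hx : 2 ≤ x) (hy : y ≤ 1) : kappaWeight x y ≤ (x - 1) * y := by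
  have := one_add_mul_self_le_rpow_one_add (s := -y) (by linarith) (p := x - 1) (by linarith)
  rw [← sub_eq_add_neg] at this
  unfold kappaWeight
  linarith

lemma kappaWeight_le_kappaWeight {a b : ℝ} (ha : 1 ≤ a) (hab : a ≤ b) (hy₀ : 0 ≤ y)
    (hy₁ : y ≤ 1) : kappaWeight a y ≤ kappaWeight b y :=
  sub_le_sub_left (rpow_le_rpow_of_exponent_ge' (by linarith) (by linarith) (by linarith)
    (by linarith)) 1

lemma continuous_kappaWeight (hx : 1 ≤ x) : Continuous (kappaWeight x) :=
  continuous_const.sub <| (continuous_const.sub continuous_id).rpow_const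
    fun _ => Or.inr (by linarith)

lemma integral_kappaWeight (hx : 1 ≤ x) (p : ℝ) :
    ∫ y in (0:ℝ)..p, kappaWeight x y = p - (1 - (1 - p) ^ x) / x := by
  have hpow : ∫ y in (0:ℝ)..p, (1 - y) ^ (x - 1) = (1 - (1 - p) ^ x) / x := by
    rw [intervalIntegral.integral_comp_sub_left (fun u : ℝ => u ^ (x - 1)),
      integral_rpow (Or.inl (by linarith))]
    norm_num
  have hint : IntervalIntegrable (fun y : ℝ => (1 - y) ^ (x - 1)) volume 0 p :=
    ((continuous_const.sub continuous_id).rpow_const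
      fun _ => Or.inr (by linarith)).intervalIntegrable 0 p
  simp only [kappaWeight]
  rw [intervalIntegral.integral_sub intervalIntegrable_const hint, hpow]
  simp

lemma integral_kappaWeight_nonneg (hx : 1 ≤ x) {p : ℝ} (hp : p ∈ Icc (0:ℝ) 1) :
    0 ≤ ∫ y in (0:ℝ)..p, kappaWeight x y :=
  intervalIntegral.integral_nonneg hp.1 fun _ hy => kappaWeight_nonneg hx hy.1 (hy.2.trans hp.2)

lemma integral_kappaWeight_le (hx : 2 ≤ x) {p : ℝ} (hp : p ∈ Icc (0:ℝ) 1) :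
    ∫ y in (0:ℝ)..p, kappaWeight x y ≤ (x - 1) * p ^ 2 / 2 :=
  calc ∫ y in (0:ℝ)..p, kappaWeight x y ≤ ∫ y in (0:ℝ)..p, (x - 1) * y :=
        intervalIntegral.integral_mono_on hp.1
          ((continuous_kappaWeight (by linarith)).intervalIntegrable 0 p)
          ((continuous_const.mul continuous_id).intervalIntegrable 0 p)
          fun _ hy => kappaWeight_le hx (hy.2.trans hp.2)
    _ = (x - 1) * p ^ 2 / 2 := by
        rw [intervalIntegral.integral_const_mul, integral_id]
        ring

lemma ofReal_integral_kappaWeight (hx : 1 ≤ x) {p : ℝ} (hp : p ∈ Icc (0:ℝ) 1) :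
    ENNReal.ofReal (∫ y in (0:ℝ)..p, kappaWeight x y)
      = ∫⁻ y in Ioo 0 p, ENNReal.ofReal (kappaWeight x y) := by
  rw [intervalIntegral.integral_of_le hp.1, integral_Ioc_eq_integral_Ioo]
  exact ofReal_integral_eq_lintegral_ofReal
    ((continuous_kappaWeight hx).integrableOn_Icc.mono_set Ioo_subset_Icc_self)
    ((ae_restrict_iff' measurableSet_Ioo).2 <| ae_of_all _ fun _ hy =>
      kappaWeight_nonneg hx hy.1.le (hy.2.le.trans hp.2))

end KappaWeight

section MuIntegrand

variable {x p : ℝ}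

lemma muInt_eq_mul_integral_kappaWeight (hx : 1 ≤ x) (hp : p ≠ 0) :
    muInt x p = x * (∫ y in (0:ℝ)..p, kappaWeight x y) / p ^ 2 := by
  have hx₀ : x ≠ 0 := by positivity
  rw [muInt, if_neg hp, integral_kappaWeight hx]
  field_simp
  ring

lemma muInt_zero : muInt x 0 = x * (x - 1) / 2 := if_pos rfl

lemma muInt_nonneg (hx : 1 ≤ x) (hp : p ∈ Icc (0:ℝ) 1) : 0 ≤ muInt x p := by
  rcases eq_or_ne p 0 with rfl | hp₀
  · rw [muInt_zero]
    have : 0 ≤ x - 1 := by linarith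
    positivity
  · rw [muInt_eq_mul_integral_kappaWeight hx hp₀]
    have := integral_kappaWeight_nonneg hx hp
    have : 0 ≤ x := by linarith
    positivity

lemma muInt_le (hx : 2 ≤ x) (hp : p ∈ Icc (0:ℝ) 1) : muInt x p ≤ x * (x - 1) / 2 := by
  rcases eq_or_ne p 0 with rfl | hp₀
  · exact muInt_zero.le
  · rw [muInt_eq_mul_integral_kappaWeight (by linarith) hp₀,
      div_le_iff₀ (by positivity)]
    have := integral_kappaWeight_le hx hp
    have : 0 ≤ x := by linarith
    nlinarith

lemma measurable_muInt (hx : 0 ≤ x) : Measurable (muInt x) :=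
  Measurable.ite measurableSet_eq measurable_const <|
    ((measurable_const.mul measurable_id).sub_const 1
      |>.add ((continuous_const.sub continuous_id).rpow_const
        fun _ => Or.inr hx).measurable).div (by fun_prop)

lemma integrableOn_muInt (Λ : Measure ℝ) [IsFiniteMeasure Λ] (hx : 2 ≤ x) :
    IntegrableOn (muInt x) (Icc 0 1) Λ :=
  IntegrableOn.of_bound (measure_lt_top _ _)
    (measurable_muInt (by linarith)).aestronglyMeasurable (x * (x - 1) / 2)
    ((ae_restrict_iff' measurableSet_Icc).2 <| ae_of_all _ fun _ hp => by
      rw [norm_of_nonneg (muInt_nonneg (by linarith) hp)]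
      exact muInt_le hx hp)

end MuIntegrand

section TailIntegral

variable (Λ : Measure ℝ)

lemma measurable_one_div_sq : Measurable fun p : ℝ => 1 / p ^ 2 := by fun_prop

lemma T_nonneg (y : ℝ) : 0 ≤ T Λ y :=
  integral_nonneg fun _ => by positivity

lemma measurable_T : Measurable (T Λ) := by
  have hT : T Λ = fun y => (∫⁻ p in Ioc y 1, ENNReal.ofReal (1 / p ^ 2) ∂Λ).toReal :=
    funext fun y => integral_eq_lintegral_of_nonneg_ae (ae_of_all _ fun _ => by positivity)
      measurable_one_div_sq.aestronglyMeasurable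
  have hanti : Antitone fun y => ∫⁻ p in Ioc y 1, ENNReal.ofReal (1 / p ^ 2) ∂Λ :=
    fun _ _ h => lintegral_mono_set (Ioc_subset_Ioc_left h)
  rw [hT]
  exact ENNReal.measurable_toReal.comp hanti.measurable

lemma ofReal_T [IsFiniteMeasure Λ] {y : ℝ} (hy : 0 < y) :
    ENNReal.ofReal (T Λ y) = ∫⁻ p in Ioc y 1, ENNReal.ofReal (1 / p ^ 2) ∂Λ := by
  refine ofReal_integral_eq_lintegral_ofReal ?_ (ae_of_all _ fun _ => by positivity)
  refine IntegrableOn.of_bound (measure_lt_top _ _) measurable_one_div_sq.aestronglyMeasurable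
    (1 / y ^ 2)
    ((ae_restrict_iff' measurableSet_Ioc).2 <| ae_of_all _ fun p hp => ?_)
  rw [norm_of_nonneg (by positivity)]
  gcongr
  exact hp.1.le

end TailIntegral

section Representation

variable (Λ : Measure ℝ) {x : ℝ}

lemma muInt_div_nonneg_ae (hx : 1 ≤ x) :
    0 ≤ᵐ[Λ.restrict (Ioc 0 1)] fun p => muInt x p / x :=
  (ae_restrict_iff' measurableSet_Ioc).2 <| ae_of_all _ fun _ hp =>
    div_nonneg (muInt_nonneg hx (Ioc_subset_Icc_self hp)) (by linarith)

lemma kappaWeight_mul_T_nonneg_ae (hx : 1 ≤ x) :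
    0 ≤ᵐ[volume.restrict (Ioo 0 1)] fun y => kappaWeight x y * T Λ y :=
  (ae_restrict_iff' measurableSet_Ioo).2 <| ae_of_all _ fun _ hy =>
    mul_nonneg (kappaWeight_nonneg hx hy.1.le hy.2.le) (T_nonneg Λ _)

lemma measurable_kappaWeight_mul_T (hx : 1 ≤ x) :
    Measurable fun y => kappaWeight x y * T Λ y :=
  (continuous_kappaWeight hx).measurable.mul (measurable_T Λ)

/-- Tonelli over the triangle `0 < y < p ≤ 1`. -/
lemma lintegral_muInt_div_eq [IsFiniteMeasure Λ] (hx : 1 ≤ x) :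
    ∫⁻ p in Ioc 0 1, ENNReal.ofReal (muInt x p / x) ∂Λ
      = ∫⁻ y in Ioo 0 1, ENNReal.ofReal (kappaWeight x y * T Λ y) := by
  set f : ℝ → ℝ → ℝ≥0∞ := fun p y => ENNReal.ofReal (1 / p ^ 2) * ENNReal.ofReal (kappaWeight x y)
  have hf : Measurable (Function.uncurry f) :=
    (measurable_one_div_sq.comp measurable_fst).ennreal_ofReal.mul
      ((continuous_kappaWeight hx).measurable.comp measurable_snd).ennreal_ofReal
  have hinner_y : ∀ p ∈ Ioc (0:ℝ) 1,
      ENNReal.ofReal (muInt x p / x) = ∫⁻ y in Iio p, f p y ∂volume.restrict (Ioo 0 1) := by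
    intro p hp
    have hx₀ : x ≠ 0 := by positivity
    rw [Measure.restrict_restrict measurableSet_Iio, Iio_inter_Ioo, min_eq_left hp.2,
      lintegral_const_mul _ (continuous_kappaWeight hx).measurable.ennreal_ofReal,
      ← ofReal_integral_kappaWeight hx (Ioc_subset_Icc_self hp),
      ← ENNReal.ofReal_mul (by positivity),
      muInt_eq_mul_integral_kappaWeight hx hp.1.ne']
    congr 1
    field_simp
  have hinner_p : ∀ y ∈ Ioo (0:ℝ) 1,
      ∫⁻ p in Ioi y, f p y ∂Λ.restrict (Ioc 0 1) = ENNReal.ofReal (kappaWeight x y * T Λ y) := by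
    intro y hy
    rw [Measure.restrict_restrict measurableSet_Ioi, inter_comm, Ioc_inter_Ioi,
      sup_eq_right.2 hy.1.le, lintegral_mul_const _ measurable_one_div_sq.ennreal_ofReal,
      ← ofReal_T Λ hy.1, ← ENNReal.ofReal_mul (T_nonneg Λ y), mul_comm]
  calc ∫⁻ p in Ioc 0 1, ENNReal.ofReal (muInt x p / x) ∂Λ
      = ∫⁻ p in Ioc 0 1, ∫⁻ y in Iio p, f p y ∂volume.restrict (Ioo 0 1) ∂Λ :=
        setLIntegral_congr_fun measurableSet_Ioc hinner_y
    _ = ∫⁻ y in Ioo 0 1, ∫⁻ p in Ioi y, f p y ∂Λ.restrict (Ioc 0 1) :=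
        lintegral_setLIntegral_Iio_swap hf
    _ = ∫⁻ y in Ioo 0 1, ENNReal.ofReal (kappaWeight x y * T Λ y) :=
        setLIntegral_congr_fun measurableSet_Ioo hinner_p

lemma mu_eq_atom_add_integral_Ioc [IsFiniteMeasure Λ] (hx : 2 ≤ x) :
    mu Λ x = (Λ {0}).toReal * (x * (x - 1) / 2) + ∫ p in Ioc 0 1, muInt x p ∂Λ := by
  have hint := integrableOn_muInt Λ hx
  rw [mu, ← Ioc_insert_left zero_le_one, insert_eq,
    setIntegral_union (disjoint_singleton_left.2 (by simp)) measurableSet_Ioc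
      (hint.mono_set (by simp)) (hint.mono_set Ioc_subset_Icc_self),
    integral_singleton, muInt_zero, measureReal_def, smul_eq_mul]

lemma integral_Ioc_muInt_div_eq [IsFiniteMeasure Λ] (hx : 2 ≤ x) :
    (∫ p in Ioc 0 1, muInt x p ∂Λ) / x = ∫ y in (0:ℝ)..1, kappaWeight x y * T Λ y := by
  rw [← integral_div, intervalIntegral.integral_of_le zero_le_one,
    integral_Ioc_eq_integral_Ioo (μ := volume),
    integral_eq_lintegral_of_nonneg_ae (muInt_div_nonneg_ae Λ (by linarith))
      ((measurable_muInt (by linarith)).div_const x).aestronglyMeasurable,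
    integral_eq_lintegral_of_nonneg_ae (kappaWeight_mul_T_nonneg_ae Λ (by linarith))
      (measurable_kappaWeight_mul_T Λ (by linarith)).aestronglyMeasurable,
    lintegral_muInt_div_eq Λ (by linarith)]

lemma intervalIntegrable_kappaWeight_mul_T [IsFiniteMeasure Λ] (hx : 2 ≤ x) :
    IntervalIntegrable (fun y => kappaWeight x y * T Λ y) volume 0 1 := by
  rw [intervalIntegrable_iff_integrableOn_Ioo_of_le zero_le_one]
  refine (lintegral_ofReal_ne_top_iff_integrable
    (measurable_kappaWeight_mul_T Λ (by linarith)).aestronglyMeasurable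
    (kappaWeight_mul_T_nonneg_ae Λ (by linarith))).1 ?_
  rw [← lintegral_muInt_div_eq Λ (by linarith)]
  exact (lintegral_ofReal_ne_top_iff_integrable
    ((measurable_muInt (by linarith)).div_const x).aestronglyMeasurable
    (muInt_div_nonneg_ae Λ (by linarith))).2
    (((integrableOn_muInt Λ hx).mono_set Ioc_subset_Icc_self).div_const x)

lemma kappa_eq_atom_add_integral [IsFiniteMeasure Λ] (hx : 2 ≤ x) :
    kappa Λ x = (x - 1) * (Λ {0}).toReal / 2 + ∫ y in (0:ℝ)..1, kappaWeight x y * T Λ y := by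
  have hx₀ : x ≠ 0 := by positivity
  rw [kappa, mu_eq_atom_add_integral_Ioc Λ hx, ← integral_Ioc_muInt_div_eq Λ hx]
  field_simp

end Representation

theorem kappa_repr_and_monotone_general (Λ : Measure ℝ) [IsFiniteMeasure Λ] :
    (∀ x : ℝ, 2 ≤ x →
      kappa Λ x =
        (x - 1) * (Λ {0}).toReal / 2 + ∫ y in (0:ℝ)..1, (1 - (1 - y) ^ (x - 1)) * T Λ y) ∧
    MonotoneOn (kappa Λ) (Set.Ici 2) := by
  refine ⟨fun x hx => kappa_eq_atom_add_integral Λ hx, fun a ha b hb hab => ?_⟩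
  rw [kappa_eq_atom_add_integral Λ ha, kappa_eq_atom_add_integral Λ hb]
  gcongr ?_ + ?_
  · gcongr
  · exact intervalIntegral.integral_mono_on zero_le_one
      (intervalIntegrable_kappaWeight_mul_T Λ ha) (intervalIntegrable_kappaWeight_mul_T Λ hb)
      fun y hy => mul_le_mul_of_nonneg_right
        (kappaWeight_le_kappaWeight (by linarith [mem_Ici.1 ha]) hab hy.1 hy.2) (T_nonneg Λ y)

/-- Representation of `κ(x)` and its monotonicity: for every `x ≥ 2`,
`κ(x) = (x−1)Λ({0})/2 + ∫_0^1 (1 − (1−y)^{x−1}) T(y) dy`, and consequently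
`x ↦ κ(x)` is increasing on `[2, ∞)`. -/
theorem kappa_repr_and_monotone (Λ : Measure ℝ) [IsFiniteMeasure Λ] (hΛ : Λ ≠ 0)
    (hsupp : Λ (Set.Icc (0:ℝ) 1)ᶜ = 0) :
    (∀ x : ℝ, 2 ≤ x →
      kappa Λ x =
        (x - 1) * (Λ {0}).toReal / 2 + ∫ y in (0:ℝ)..1, (1 - (1 - y) ^ (x - 1)) * T Λ y) ∧
    MonotoneOn (kappa Λ) (Set.Ici 2) :=
  kappa_repr_and_monotone_general Λ
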